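/- arXiv:2412.00480 — 2 statements merged into one kernel-verified Lean document; each statement's English description precedes it below -/
import Mathlib

section
/- Let P and Q each be sets of n permutations of {1,…,n} such that any two distinct elements within P (respectively within Q) have Hamming distance exactly n, and suppose every σ ∈ P and τ ∈ Q satisfy d(σ,τ) = n−1. Then the Latin squares L_P and L_Q obtained by setting L_P(i,j) = k iff σ_k(j) = i (and similarly for Q) are orthogonal. -/
/-- Hamming distance on permutations of a finite set: the number of points where they differ. -/
def hammingDistPerm {X : Type*} [DecidableEq X] [Fintype X] (σ τ : Equiv.Perm X) : ℕ :=
  (Finset.univ.filter fun x => σ x ≠ τ x).card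

/-- Two arrays are orthogonal if the paired map is injective. -/
def OrthogonalLS {n : ℕ} (L₁ L₂ : Fin n → Fin n → Fin n) : Prop :=
  Function.Injective fun p : Fin n × Fin n => (L₁ p.1 p.2, L₂ p.1 p.2)

/-- If `P` and `Q` are `(n,n)`-PAs of size `n` with all cross-distances equal to `n - 1`,
then the associated Latin squares are orthogonal. -/
theorem orthogonal_from_separable (n : ℕ)
    (σ τ : Fin n → Equiv.Perm (Fin n))
    (hσinj : Function.Injective σ) (hτinj : Function.Injective τ)
    (hσ : ∀ s t : Fin n, s ≠ t → hammingDistPerm (σ s) (σ t) = n)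
    (hτ : ∀ s t : Fin n, s ≠ t → hammingDistPerm (τ s) (τ t) = n)
    (hcross : ∀ s t : Fin n, hammingDistPerm (σ s) (τ t) = n - 1)
    (LP LQ : Fin n → Fin n → Fin n)
    (hLP : ∀ i j, σ (LP i j) j = i) (hLQ : ∀ i j, τ (LQ i j) j = i) :
    OrthogonalLS LP LQ := by
  rintro ⟨i₁, j₁⟩ ⟨i₂, j₂⟩ h
  simp only [Prod.mk.injEq] at h
  obtain ⟨hP, hQ⟩ := h
  have hn : 0 < n := j₁.pos
  have hs1 : σ (LP i₁ j₁) j₁ = i₁ := hLP i₁ j₁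
  have hs2 : σ (LP i₁ j₁) j₂ = i₂ := by rw [hP]; exact hLP i₂ j₂
  have ht1 : τ (LQ i₁ j₁) j₁ = i₁ := hLQ i₁ j₁
  have ht2 : τ (LQ i₁ j₁) j₂ = i₂ := by rw [hQ]; exact hLQ i₂ j₂
  set k := LP i₁ j₁
  set l := LQ i₁ j₁
  -- agreement set has exactly one element
  have hcard : (Finset.univ.filter fun x => σ k x = τ l x).card = 1 := by
    have htot := Finset.card_filter_add_card_filter_not
      (s := (Finset.univ : Finset (Fin n))) (p := fun x => σ k x = τ l x)
    have hd : hammingDistPerm (σ k) (τ l) = n - 1 := hcross k l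
    unfold hammingDistPerm at hd
    simp only [ne_eq] at hd htot
    simp only [Finset.card_univ, Fintype.card_fin] at htot
    omega
  have hjj : j₁ = j₂ := by
    have h1 : j₁ ∈ Finset.univ.filter fun x => σ k x = τ l x := by
      simp [hs1, ht1]
    have h2 : j₂ ∈ Finset.univ.filter fun x => σ k x = τ l x := by
      simp [hs2, ht2]
    have := Finset.card_le_one.mp (le_of_eq hcard)
    exact this _ h1 _ h2
  have hii : i₁ = i₂ := by rw [← hs1, ← hs2, hjj]
  simp [hii, hjj]
end

section
/- If D is an (n,k,1)-difference matrix over a finite group G of order n with normalized first row, then the k−1 Latin squares L_1,…,L_{k−1} obtained from rows 2 through k by right translation (row j of L_m is the (m+1)-th row of D multiplied on the right by g_j) are pairwise orthogonal; hence N(n) ≥ k−1. -/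
/-- An `n × n` array is a Latin square if every row and every column is a permutation. -/
def IsLatinSquare {n : ℕ} (L : Fin n → Fin n → Fin n) : Prop :=
  (∀ i, Function.Bijective (L i)) ∧ (∀ j, Function.Bijective fun i => L i j)

/-- A `(n,k,1)`-difference matrix over a group `G` of order `n`. -/
def IsDiffMatrix {G : Type*} [Group G] {k n : ℕ} (D : Fin k → Fin n → G) : Prop :=
  ∀ s t : Fin k, s ≠ t → Function.Bijective fun j : Fin n => D s j * (D t j)⁻¹

/-- The `k-1` Latin squares obtained from a normalized `(n,k,1)`-difference matrix by right
translation are pairwise orthogonal; hence there exist `k-1` MOLS of order `n`. -/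
theorem mols_from_diff_matrix {G : Type*} [Group G] [Fintype G] [DecidableEq G]
    (n k : ℕ) (hn : Fintype.card G = n) (hn1 : 1 ≤ n) (hk : 2 ≤ k)
    (D : Fin k → Fin n → G) (hD : IsDiffMatrix D)
    (g : Fin n ≃ G) (hg1 : g ⟨0, by omega⟩ = 1)
    (hrow1 : ∀ j, D ⟨0, by omega⟩ j = 1) :
    (∀ i i' : Fin k, i ≠ ⟨0, by omega⟩ → i' ≠ ⟨0, by omega⟩ → i ≠ i' →
      IsLatinSquare (fun j c => g.symm (D i c * g j)) ∧
      OrthogonalLS (fun j c => g.symm (D i c * g j)) (fun j c => g.symm (D i' c * g j))) ∧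
    (∃ L : Fin (k - 1) → Fin n → Fin n → Fin n,
      (∀ m, IsLatinSquare (L m)) ∧ ∀ m m', m ≠ m' → OrthogonalLS (L m) (L m')) := by
  have hbij : ∀ i : Fin k, i ≠ ⟨0, by omega⟩ → Function.Bijective (fun c => D i c) := by
    intro i hi
    have := hD i ⟨0, by omega⟩ hi
    simpa [hrow1] using this
  have hlatin : ∀ i : Fin k, i ≠ ⟨0, by omega⟩ →
      IsLatinSquare (fun j c => g.symm (D i c * g j)) := by
    intro i hi
    constructor
    · intro j
      have h1 : Function.Bijective (fun c => D i c * g j) :=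
        (Equiv.mulRight (g j)).bijective.comp (hbij i hi)
      exact g.symm.bijective.comp h1
    · intro c
      have h1 : Function.Bijective (fun j : Fin n => D i c * g j) :=
        (Equiv.mulLeft (D i c)).bijective.comp g.bijective
      exact g.symm.bijective.comp h1
  have horth : ∀ i i' : Fin k, i ≠ i' →
      OrthogonalLS (fun j c => g.symm (D i c * g j)) (fun j c => g.symm (D i' c * g j)) := by
    intro i i' hii' p q h
    simp only [Prod.mk.injEq] at h
    have E1 : D i p.2 * g p.1 = D i q.2 * g q.1 := g.symm.injective h.1
    have E2 : D i' p.2 * g p.1 = D i' q.2 * g q.1 := g.symm.injective h.2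
    have h2 : p.2 = q.2 := by
      apply (hD i i' hii').injective
      show D i p.2 * (D i' p.2)⁻¹ = D i q.2 * (D i' q.2)⁻¹
      have := congrArg₂ (fun a b => a * b⁻¹) E1 E2
      simpa [mul_inv_rev, mul_assoc] using this
    have h1 : p.1 = q.1 := by
      rw [h2] at E1
      exact g.injective (mul_left_cancel E1)
    exact Prod.ext h1 h2
  refine ⟨fun i i' hi hi' hne => ⟨hlatin i hi, horth i i' hne⟩, ?_⟩
  refine ⟨fun m j c => g.symm (D ⟨m.1 + 1, by have := m.2; omega⟩ c * g j), ?_, ?_⟩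
  · intro m
    exact hlatin _ (by simp [Fin.ext_iff])
  · intro m m' hmm'
    exact horth _ _ (by simpa [Fin.ext_iff] using fun h => hmm' (Fin.ext h))
end
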